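/- arXiv:1408.0265 — 2 statements merged into one kernel-verified Lean document; each statement's English description precedes it below -/
import Mathlib

section
/- Let $1 \le p \le q \le \infty$ and let $X$ be a Banach space with a basis $(x_i)$. If every normalized block sequence $(y_j)$ of $(x_i)$ satisfies $\theta \left(\sum_j |\lambda_j|^q\right)^{1/q} \le \|\sum_j \lambda_j y_j\| \le 2 \left(\sum_j |\lambda_j|^p\right)^{1/p}$ for all finitely supported scalars $(\lambda_j)$ and some fixed $\theta > 0$, then for every $r \in [1,\infty] \setminus [p,q]$, $\ell_r$ is not finitely block represented in $(x_i)$. -/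
open ENNReal

/-- The `ℓ_r` norm of a finite tuple of reals, for an extended exponent `r ∈ [1,∞]`;
for `r = ∞` it is the sup norm. -/
noncomputable def lpNormFin (r : ℝ≥0∞) {N : ℕ} (lam : Fin N → ℝ) : ℝ :=
  if r = ⊤ then ⨆ j, |lam j| else (∑ j, |lam j| ^ r.toReal) ^ (1 / r.toReal)

/-- `y` is a (finite) block sequence of the sequence `x`: each `y j` is a finite linear
combination of the `x i` over successive finite sets of indices. -/
def IsBlockSeq {X : Type*} [NormedAddCommGroup X] [NormedSpace ℝ X]
    (x : ℕ → X) {N : ℕ} (y : Fin N → X) : Prop :=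
  ∃ (a : ℕ → ℝ) (F : Fin N → Finset ℕ),
    (∀ j k : Fin N, j < k → ∀ i ∈ F j, ∀ i' ∈ F k, i < i') ∧
    ∀ j, y j = ∑ i ∈ F j, a i • x i

/-- `ℓ_r` is finitely block represented in the sequence `x`: for every `N` and `ε > 0`
there is a block sequence of length `N` that is `(1+ε)`-equivalent to the unit vector
basis of `ℓ_r^N` (equivalence with the factor `√(1+ε)` on each side). -/
def FinBlockRep {X : Type*} [NormedAddCommGroup X] [NormedSpace ℝ X]
    (r : ℝ≥0∞) (x : ℕ → X) : Prop :=
  ∀ (N : ℕ) (ε : ℝ), 0 < ε → ∃ y : Fin N → X, IsBlockSeq x y ∧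
    ∀ lam : Fin N → ℝ,
      (Real.sqrt (1 + ε))⁻¹ * lpNormFin r lam ≤ ‖∑ j, lam j • y j‖ ∧
      ‖∑ j, lam j • y j‖ ≤ Real.sqrt (1 + ε) * lpNormFin r lam

lemma lpNormFin_mono {N : ℕ} (hN : N ≠ 0) (r : ℝ≥0∞) {u v : Fin N → ℝ}
    (h : ∀ j, |u j| ≤ |v j|) : lpNormFin r u ≤ lpNormFin r v := by
  haveI : Nonempty (Fin N) := Fin.pos_iff_nonempty.mp (Nat.pos_of_ne_zero hN)
  unfold lpNormFin
  split_ifs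
  · exact ciSup_mono (Set.Finite.bddAbove (Set.finite_range _)) h
  · refine Real.rpow_le_rpow (Finset.sum_nonneg fun j _ => Real.rpow_nonneg (abs_nonneg _) _)
      (Finset.sum_le_sum fun j _ => Real.rpow_le_rpow (abs_nonneg _) (h j) ENNReal.toReal_nonneg)
      (one_div_nonneg.mpr ENNReal.toReal_nonneg)

lemma lpNormFin_const {N : ℕ} (hN : N ≠ 0) (r : ℝ≥0∞) (hr : 1 ≤ r) {c : ℝ} (hc : 0 ≤ c) :
    lpNormFin r (fun _ : Fin N => c) = (N : ℝ) ^ (1 / r.toReal) * c := by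
  haveI : Nonempty (Fin N) := Fin.pos_iff_nonempty.mp (Nat.pos_of_ne_zero hN)
  unfold lpNormFin
  split_ifs with h
  · rw [ciSup_const, abs_of_nonneg hc, h]
    simp
  · have ht : 0 < r.toReal := ENNReal.toReal_pos ((zero_lt_one.trans_le hr).ne') h
    rw [Finset.sum_const, Finset.card_univ, Fintype.card_fin, nsmul_eq_mul,
      Real.mul_rpow (Nat.cast_nonneg _) (Real.rpow_nonneg (abs_nonneg _) _),
      ← Real.rpow_mul (abs_nonneg _), mul_one_div_cancel ht.ne', Real.rpow_one,
      abs_of_nonneg hc]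

lemma lpNormFin_single {N : ℕ} (j : Fin N) (r : ℝ≥0∞) (hr : 1 ≤ r) :
    lpNormFin r (fun k => if k = j then (1:ℝ) else 0) = 1 := by
  haveI : Nonempty (Fin N) := ⟨j⟩
  unfold lpNormFin
  split_ifs with h
  · refine le_antisymm (ciSup_le fun k => ?_) ?_
    · by_cases hk : k = j <;> simp [hk]
    · have := le_ciSup (Set.Finite.bddAbove (Set.finite_range
        (fun k => |if k = j then (1:ℝ) else 0|))) j
      simpa using this
  · have ht : 0 < r.toReal := ENNReal.toReal_pos ((zero_lt_one.trans_le hr).ne') h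
    have : ∀ k : Fin N, |if k = j then (1:ℝ) else 0| ^ r.toReal
        = if k = j then (1:ℝ) else 0 := by
      intro k; split_ifs <;> simp [Real.zero_rpow ht.ne']
    rw [Finset.sum_congr rfl fun k _ => this k, Finset.sum_ite_eq' Finset.univ j fun _ => (1:ℝ)]
    simp

lemma no_power_gap {α β C : ℝ} (hβ : 0 ≤ β) (hab : β < α)
    (h : ∀ N : ℕ, N ≠ 0 → (N : ℝ) ^ α ≤ C * (N : ℝ) ^ β) : False := by
  have hδ : 0 < α - β := sub_pos.mpr hab
  obtain ⟨N, hN⟩ := exists_nat_gt (max 1 (C ^ (1 / (α - β))))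
  have hN1 : (1:ℝ) < N := (le_max_left _ _).trans_lt hN
  have hN0 : (0:ℝ) < N := zero_lt_one.trans hN1
  have hNne : N ≠ 0 := (Nat.cast_pos.mp hN0).ne'
  have hC : C < (N : ℝ) ^ (α - β) := by
    rcases le_or_gt C 0 with hC0 | hC0
    · exact hC0.trans_lt (Real.rpow_pos_of_pos hN0 _)
    · have h1 : C ^ (1 / (α - β)) < N := (le_max_right _ _).trans_lt hN
      have h2 := Real.rpow_lt_rpow (Real.rpow_nonneg hC0.le _) h1 hδ
      rwa [← Real.rpow_mul hC0.le, one_div_mul_cancel hδ.ne', Real.rpow_one] at h2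
  have hkey := h N hNne
  have hNβ : 0 < (N : ℝ) ^ β := Real.rpow_pos_of_pos hN0 β
  have heq : (N : ℝ) ^ α = (N : ℝ) ^ β * (N : ℝ) ^ (α - β) := by
    rw [← Real.rpow_add hN0]; congr 1; ring
  nlinarith [mul_lt_mul_of_pos_left hC hNβ]

/-- if every normalized block sequence of `(x i)` satisfies a lower `ℓ_q`
estimate with constant `θ` and an upper `ℓ_p` estimate with constant `2`, then for every
`r ∈ [1,∞] \ [p,q]`, `ℓ_r` is not finitely block represented in `(x i)`. -/
theorem stmt_7 {X : Type*} [NormedAddCommGroup X] [NormedSpace ℝ X] [CompleteSpace X]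
    (x : ℕ → X) (p q : ℝ≥0∞) (hp : 1 ≤ p) (hpq : p ≤ q)
    (θ : ℝ) (hθ : 0 < θ)
    (hblock : ∀ (N : ℕ) (y : Fin N → X), IsBlockSeq x y → (∀ j, ‖y j‖ = 1) →
      ∀ lam : Fin N → ℝ,
        θ * lpNormFin q lam ≤ ‖∑ j, lam j • y j‖ ∧
        ‖∑ j, lam j • y j‖ ≤ 2 * lpNormFin p lam)
    (r : ℝ≥0∞) (hr : 1 ≤ r) (hrout : r < p ∨ q < r) :
    ¬ FinBlockRep r x := by
  intro hFBR
  have hq1 : 1 ≤ q := hp.trans hpq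
  set s : ℝ := Real.sqrt (1 + 1) with hs_def
  have hs2 : s * s = 2 := by
    rw [hs_def, Real.mul_self_sqrt (by norm_num)]; norm_num
  have hs0 : 0 < s := Real.sqrt_pos.mpr (by norm_num)
  -- main quantitative consequences for each N
  have main : ∀ N : ℕ, N ≠ 0 →
      θ * (N : ℝ) ^ (1 / q.toReal) ≤ 2 * (N : ℝ) ^ (1 / r.toReal) ∧
      (N : ℝ) ^ (1 / r.toReal) ≤ 4 * (N : ℝ) ^ (1 / p.toReal) := by
    intro N hN
    obtain ⟨y, hbs, hequiv⟩ := hFBR N 1 one_pos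
    -- norms of y j are between s⁻¹ and s
    have hnorm : ∀ j : Fin N, s⁻¹ ≤ ‖y j‖ ∧ ‖y j‖ ≤ s := by
      intro j
      have hyj : ∑ k, (if k = j then (1:ℝ) else 0) • y k = y j := by
        simp [ite_smul]
      have h1 := hequiv (fun k => if k = j then (1:ℝ) else 0)
      rw [hyj, lpNormFin_single j r hr] at h1
      constructor
      · simpa using h1.1
      · simpa using h1.2
    have hypos : ∀ j, 0 < ‖y j‖ := fun j =>
      lt_of_lt_of_le (inv_pos.mpr hs0) (hnorm j).1
    -- normalized blocks
    set z : Fin N → X := fun j => ‖y j‖⁻¹ • y j with hz_def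
    have hbsz : IsBlockSeq x z := by
      obtain ⟨a, F, hord, hyF⟩ := hbs
      have hdisj : ∀ (i : ℕ) (j k : Fin N), i ∈ F j → i ∈ F k → j = k := by
        intro i j k hj hk
        by_contra hne
        rcases lt_or_gt_of_ne hne with hlt | hlt
        · exact lt_irrefl i (hord j k hlt i hj i hk)
        · exact lt_irrefl i (hord k j hlt i hk i hj)
      refine ⟨fun i => (if h : ∃ j, i ∈ F j then ‖y h.choose‖⁻¹ else 1) * a i, F, hord, ?_⟩
      intro j
      show ‖y j‖⁻¹ • y j = _
      obtain ⟨c, hc⟩ : ∃ c : ℝ, c = ‖y j‖⁻¹ := ⟨_, rfl⟩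
      rw [← hc, hyF j, Finset.smul_sum]
      refine Finset.sum_congr rfl fun i hi => ?_
      have hex : ∃ k, i ∈ F k := ⟨j, hi⟩
      have hch : hex.choose = j := hdisj i _ _ hex.choose_spec hi
      show c • (a i • x i) = ((if h : ∃ k, i ∈ F k then ‖y h.choose‖⁻¹ else 1) * a i) • x i
      rw [dif_pos hex, hch, ← hc, smul_smul]
    have hz1 : ∀ j, ‖z j‖ = 1 := by
      intro j
      rw [hz_def]
      simp only [norm_smul, norm_inv, norm_norm]
      exact inv_mul_cancel₀ (hypos j).ne'
    have hZ := hblock N z hbsz hz1 (fun _ => (1:ℝ))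
    -- relate sums
    have hsum : ∑ j, (1:ℝ) • z j = ∑ j, (fun j => ‖y j‖⁻¹) j • y j := by
      simp [hz_def]
    have hE := hequiv (fun j => ‖y j‖⁻¹)
    rw [← hsum] at hE
    set A : ℝ := ‖∑ j, (1:ℝ) • z j‖ with hA_def
    set B : ℝ := lpNormFin r (fun j : Fin N => ‖y j‖⁻¹) with hB_def
    -- bounds on B
    have hBub : B ≤ (N : ℝ) ^ (1 / r.toReal) * s := by
      rw [← lpNormFin_const hN r hr hs0.le]
      refine lpNormFin_mono hN r fun j => ?_
      rw [abs_of_nonneg (inv_nonneg.mpr (hypos j).le), abs_of_nonneg hs0.le]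
      rw [show s = (s⁻¹)⁻¹ by rw [inv_inv]]
      exact inv_anti₀ (inv_pos.mpr hs0) (hnorm j).1
    have hBlb : (N : ℝ) ^ (1 / r.toReal) * s⁻¹ ≤ B := by
      rw [← lpNormFin_const hN r hr (inv_nonneg.mpr hs0.le)]
      refine lpNormFin_mono hN r fun j => ?_
      rw [abs_of_nonneg (inv_nonneg.mpr hs0.le), abs_of_nonneg (inv_nonneg.mpr (hypos j).le)]
      exact inv_anti₀ (hypos j) (hnorm j).2
    have hq' := hZ.1
    have hp' := hZ.2
    rw [lpNormFin_const hN q hq1 zero_le_one] at hq'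
    rw [lpNormFin_const hN p hp zero_le_one] at hp'
    have hNr : (0:ℝ) < (N : ℝ) ^ (1 / r.toReal) :=
      Real.rpow_pos_of_pos (by exact_mod_cast Nat.pos_of_ne_zero hN) _
    constructor
    · calc θ * (N : ℝ) ^ (1 / q.toReal) = θ * ((N : ℝ) ^ (1 / q.toReal) * 1) := by ring
        _ ≤ A := hq'
        _ ≤ s * B := hE.2
        _ ≤ s * ((N : ℝ) ^ (1 / r.toReal) * s) := by
            exact mul_le_mul_of_nonneg_left hBub hs0.le
        _ = (s * s) * (N : ℝ) ^ (1 / r.toReal) := by ring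
        _ = 2 * (N : ℝ) ^ (1 / r.toReal) := by rw [hs2]
    · have hchain : s⁻¹ * ((N : ℝ) ^ (1 / r.toReal) * s⁻¹) ≤ 2 * ((N : ℝ) ^ (1 / p.toReal) * 1) :=
        le_trans (mul_le_mul_of_nonneg_left hBlb (inv_nonneg.mpr hs0.le))
          (le_trans hE.1 hp')
      have hsi : s⁻¹ * s⁻¹ = 2⁻¹ := by rw [← mul_inv, hs2]
      nlinarith [hchain]
    -- end main
  rcases hrout with hrp | hqr
  · -- r < p, use the second inequality
    have hrtop : r ≠ ⊤ := ne_top_of_lt hrp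
    have htr : 0 < r.toReal := ENNReal.toReal_pos ((zero_lt_one.trans_le hr).ne') hrtop
    have hβα : 1 / p.toReal < 1 / r.toReal := by
      by_cases hptop : p = ⊤
      · rw [hptop]; simpa using one_div_pos.mpr htr
      · exact one_div_lt_one_div_of_lt htr ((ENNReal.toReal_lt_toReal hrtop hptop).mpr hrp)
    exact no_power_gap (one_div_nonneg.mpr ENNReal.toReal_nonneg) hβα
      (fun N hN => (main N hN).2)
  · -- q < r, use the first inequality
    have hqtop : q ≠ ⊤ := ne_top_of_lt hqr
    have htq : 0 < q.toReal := ENNReal.toReal_pos ((zero_lt_one.trans_le hq1).ne') hqtop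
    have hβα : 1 / r.toReal < 1 / q.toReal := by
      by_cases hrtop : r = ⊤
      · rw [hrtop]; simpa using one_div_pos.mpr htq
      · exact one_div_lt_one_div_of_lt htq ((ENNReal.toReal_lt_toReal hqtop hrtop).mpr hqr)
    refine no_power_gap (C := 2/θ) (one_div_nonneg.mpr ENNReal.toReal_nonneg) hβα (fun N hN => ?_)
    have h1 := (main N hN).1
    rw [div_mul_eq_mul_div, le_div_iff₀ hθ]
    linarith
end

section
/- Let $X$ be a Banach space with a $1$-unconditional basis $(e_i)$, and suppose there exist $1 < p \le q < \infty$ and $\theta > 0$ such that every normalized block sequence $(y_j)$ of $(e_i)$ satisfies $\theta\|(\lambda_j)\|_{\ell_q} \le \|\sum_j \lambda_j y_j\| \le 2\|(\lambda_j)\|_{\ell_p}$ for all finitely supported scalars. Then neither $c_0$ nor $\ell_1$ embeds isomorphically into $X$. -/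
open ENNReal ZeroAtInfty

instance : Fact ((1 : ℝ≥0∞) ≤ 1) := ⟨le_rfl⟩

/-!
A normalized 1-unconditional sequence with dense span is a Schauder basis. If `T` embeds `c₀` or
`ℓ₁`, pass to a subsequence of the unit vectors `d k` along which every basis coordinate of
`T (d k)` converges; the differences `T (d (ψ (2m+1)) - d (ψ (2m)))` are then bounded above and
below and have coordinates tending to `0`, so a gliding hump selects, for each `N`, `N` of them
that are small perturbations of a block sequence. The block estimates force their sum to have norm
`≳ N^(1/q)` and `≲ N^(1/p)`, whereas in `c₀` this sum stays bounded and in `ℓ₁` it has norm `2N`;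
as `q < ∞` and `p > 1`, both are impossible for large `N`.
-/

open Filter Topology

section BlockSeq

variable {X : Type*} [NormedAddCommGroup X] [NormedSpace ℝ X] {x : ℕ → X} {N : ℕ}

theorem IsBlockSeq.of_successive {y : Fin N → X} (F : Fin N → Finset ℕ)
    (hF : ∀ j k : Fin N, j < k → ∀ i ∈ F j, ∀ i' ∈ F k, i < i') (a : Fin N → ℕ → ℝ)
    (hy : ∀ j, y j = ∑ i ∈ F j, a j i • x i) : IsBlockSeq x y := by
  classical
  refine ⟨fun i => ∑ j, if i ∈ F j then a j i else 0, F, hF, fun j => ?_⟩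
  rw [hy j]
  refine Finset.sum_congr rfl fun i hi => ?_
  show a j i • x i = (∑ j', if i ∈ F j' then a j' i else 0) • x i
  rw [Finset.sum_eq_single j (fun j' _ hne => if_neg fun hi' => ?_) (by simp), if_pos hi]
  rcases lt_or_gt_of_ne hne with h | h
  · exact lt_irrefl i (hF j' j h i hi' i hi)
  · exact lt_irrefl i (hF j j' h i hi i hi')

theorem IsBlockSeq.smul {y : Fin N → X} (hy : IsBlockSeq x y) (t : Fin N → ℝ) :
    IsBlockSeq x (fun j => t j • y j) := by
  obtain ⟨a, F, hF, hy⟩ := hy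
  exact .of_successive F hF (fun j i => t j * a i) fun j => by
    simp only [hy j, Finset.smul_sum, smul_smul]

end BlockSeq

theorem tendsto_apply_of_dense_span {𝕜 X ι : Type*} [NontriviallyNormedField 𝕜]
    [NormedAddCommGroup X] [NormedSpace 𝕜 X] {l : Filter ι} {P : ι → X →L[𝕜] X} {C : NNReal}
    (hP : ∀ n, ‖P n‖ ≤ C) {s : Set X} (hs : Dense (Submodule.span 𝕜 s : Set X))
    (h : ∀ x ∈ s, Tendsto (P · x) l (𝓝 x)) (x : X) : Tendsto (P · x) l (𝓝 x) := by
  have hclosed : IsClosed {x | Tendsto (P · x) l (𝓝 x)} :=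
    (LipschitzWith.uniformEquicontinuous _ C fun n =>
      ContinuousLinearMap.lipschitzWith_of_opNorm_le (hP n)).equicontinuous
      |>.isClosed_setOfPred_tendsto continuous_id
  refine hs.induction (fun y hy => ?_) hclosed x
  induction hy using Submodule.span_induction with
  | mem y hy => exact h y hy
  | zero => simpa using tendsto_const_nhds
  | add y z _ _ hy hz => simpa using hy.add hz
  | smul a y _ hy => simpa using hy.const_smul a

section Unconditional

variable {X : Type*} [NormedAddCommGroup X] [NormedSpace ℝ X] {e : ℕ → X}

def IsOneUnconditional (e : ℕ → X) : Prop :=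
  ∀ (s : Finset ℕ) (lam eps : ℕ → ℝ), (∀ i, |eps i| ≤ 1) →
    ‖∑ i ∈ s, (eps i * lam i) • e i‖ ≤ ‖∑ i ∈ s, lam i • e i‖

namespace IsOneUnconditional

variable (h : IsOneUnconditional e)
include h

theorem norm_sum_inter_le (s t : Finset ℕ) (lam : ℕ → ℝ) :
    ‖∑ i ∈ s ∩ t, lam i • e i‖ ≤ ‖∑ i ∈ s, lam i • e i‖ := by
  classical
  convert h s lam (fun i => if i ∈ t then 1 else 0) (fun i => by split_ifs <;> simp) using 2
  rw [← Finset.filter_mem_eq_inter, Finset.sum_filter]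
  exact Finset.sum_congr rfl fun i _ => by split_ifs <;> simp

theorem norm_sum_le_norm_linearCombination (s : Finset ℕ) (c : ℕ →₀ ℝ) :
    ‖∑ i ∈ s, c i • e i‖ ≤ ‖Finsupp.linearCombination ℝ e c‖ := by
  rw [Finsupp.linearCombination_apply, Finsupp.sum, ← Finset.sum_subset Finset.inter_subset_left
    (fun i _ hi => ?_), Finset.inter_comm]
  · exact h.norm_sum_inter_le _ _ _
  · simp_all

theorem abs_le_norm_linearCombination (he : ∀ i, ‖e i‖ = 1) (c : ℕ →₀ ℝ) (i : ℕ) :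
    |c i| ≤ ‖Finsupp.linearCombination ℝ e c‖ := by
  simpa [norm_smul, he i] using h.norm_sum_le_norm_linearCombination {i} c

theorem linearIndependent (he : ∀ i, ‖e i‖ = 1) : LinearIndependent ℝ e :=
  linearIndependent_iff.mpr fun c hc => Finsupp.ext fun i => abs_nonpos_iff.mp <| by
    simpa [hc] using h.abs_le_norm_linearCombination he c i

theorem exists_coord (he : ∀ i, ‖e i‖ = 1) :
    ∃ f : ℕ → X →L[ℝ] ℝ, ∀ i c, f i (Finsupp.linearCombination ℝ e c) = c i := by
  have hli := h.linearIndependent he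
  let V := Submodule.span ℝ (Set.range e)
  let g (i : ℕ) : V →L[ℝ] ℝ := LinearMap.mkContinuous (Finsupp.lapply i ∘ₗ hli.repr) 1
    fun v => by
      simpa [hli.linearCombination_repr] using h.abs_le_norm_linearCombination he (hli.repr v) i
  choose f hf using fun i => exists_extension_norm_eq V (g i)
  refine ⟨f, fun i c => ?_⟩
  have hc : Finsupp.linearCombination ℝ e c ∈ V :=
    Finsupp.mem_span_range_iff_exists_finsupp.mpr ⟨c, rfl⟩
  rw [← Submodule.coe_mk _ hc, (hf i).1]
  simp [g, hli.repr_eq (x := ⟨_, hc⟩) rfl]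

theorem exists_schauderBasis (he : ∀ i, ‖e i‖ = 1)
    (hspan : (Submodule.span ℝ (Set.range e)).topologicalClosure = ⊤) :
    ∃ b : SchauderBasis ℝ X, ⇑b = e := by
  have hdense := Submodule.dense_iff_topologicalClosure_eq_top.mpr hspan
  obtain ⟨f, hf⟩ := h.exists_coord he
  have hfe (i j : ℕ) : f i (e j) = if i = j then 1 else 0 := by
    simpa [Finsupp.single_apply, eq_comm] using hf i (Finsupp.single j 1)
  let P (n : ℕ) : X →L[ℝ] X := ∑ i ∈ Finset.range n, (f i).smulRight (e i)
  have hP (n : ℕ) (x : X) : P n x = ∑ i ∈ Finset.range n, f i x • e i := by simp [P]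
  have hP_le (n : ℕ) : ‖P n‖ ≤ (1 : NNReal) := by
    refine (P n).opNorm_le_bound zero_le_one fun x => ?_
    rw [NNReal.coe_one, one_mul]
    refine hdense.induction (fun x hx => ?_) (isClosed_le (P n).continuous.norm continuous_norm) x
    obtain ⟨c, rfl⟩ := Finsupp.mem_span_range_iff_exists_finsupp.mp hx
    simpa [hP, ← Finsupp.linearCombination_apply, hf]
      using h.norm_sum_le_norm_linearCombination (Finset.range n) c
  have hP_basis : ∀ x ∈ Set.range e, Tendsto (P · x) atTop (𝓝 x) := by
    rintro _ ⟨j, rfl⟩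
    refine tendsto_const_nhds.congr' ?_
    filter_upwards [eventually_gt_atTop j] with n hn
    simp [hP, hfe, hn]
  refine ⟨⟨e, f, fun i j => ?_, fun x => ?_⟩, rfl⟩
  · simp [hfe, Pi.single_apply]
  · rw [HasSum, SummationFilter.conditional_filter_eq_map_range, tendsto_map'_iff]
    simpa [Function.comp_def, hP] using tendsto_apply_of_dense_span hP_le hdense hP_basis x

end IsOneUnconditional

end Unconditional

namespace SchauderBasis

variable {X : Type*} [NormedAddCommGroup X] [NormedSpace ℝ X] (b : SchauderBasis ℝ X)
  {u : ℕ → X}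

theorem tendsto_proj_apply_of_tendsto_coord
    (hu : ∀ i, Tendsto (fun k => b.coord i (u k)) atTop (𝓝 0)) (n : ℕ) :
    Tendsto (fun k => b.proj n (u k)) atTop (𝓝 0) := by
  simpa [SchauderBasis.proj_apply] using
    tendsto_finsetSum (Finset.range n) fun i _ => (hu i).smul_const (b i)

theorem exists_proj_approx (hu : ∀ i, Tendsto (fun k => b.coord i (u k)) atTop (𝓝 0))
    {ε : ℝ} (hε : 0 < ε) :
    ∃ n k : ℕ → ℕ, StrictMono n ∧ StrictMono k ∧
      ∀ j, ‖b.proj (n j) (u (k j))‖ < ε ∧ ‖b.proj (n (j + 1)) (u (k j)) - u (k j)‖ < ε := by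
  have hstep : ∀ m : ℕ × ℕ, ∃ m' : ℕ × ℕ, m.1 < m'.1 ∧ m.2 < m'.2 ∧
      ‖b.proj m'.1 (u m.2) - u m.2‖ < ε ∧ ‖b.proj m'.1 (u m'.2)‖ < ε := by
    rintro ⟨n, k⟩
    obtain ⟨n', hn', hnear⟩ := ((eventually_gt_atTop n).and
      ((tendsto_iff_norm_sub_tendsto_zero.mp (b.tendsto_proj (u k))).eventually_lt_const hε)).exists
    obtain ⟨k', hk', hsmall⟩ := ((eventually_gt_atTop k).and
      ((b.tendsto_proj_apply_of_tendsto_coord hu n').norm.eventually_lt_const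
        (by simpa using hε))).exists
    exact ⟨(n', k'), hn', hk', hnear, hsmall⟩
  -- `g (n j, k j) = (n (j + 1), k (j + 1))`: first `n (j + 1)` is taken so large that the
  -- projection nearly recovers `u (k j)`, then `k (j + 1)` so that `u (k (j + 1))` has a small
  -- head below `n (j + 1)`.
  choose g hg using hstep
  let s (j : ℕ) : ℕ × ℕ := g^[j] (0, 0)
  have hs (j : ℕ) : s (j + 1) = g (s j) := Function.iterate_succ_apply' g j _
  refine ⟨fun j => (s j).1, fun j => (s j).2, strictMono_nat_of_lt_succ fun j => ?_,
    strictMono_nat_of_lt_succ fun j => ?_, fun j => ⟨?_, ?_⟩⟩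
  · rw [hs]; exact (hg _).1
  · rw [hs]; exact (hg _).2.1
  · cases j with
    | zero => simpa [s] using hε
    | succ j => simp only [hs]; exact (hg _).2.2.2
  · simp only [hs]; exact (hg _).2.2.1

theorem isBlockSeq_proj_sub {n : ℕ → ℕ} (hn : StrictMono n) {N : ℕ} (x : Fin N → X) :
    IsBlockSeq b (fun j => b.proj (n (j + 1)) (x j) - b.proj (n j) (x j)) := by
  refine .of_successive (fun j => Finset.Ico (n j) (n (j + 1))) (fun j k hjk i hi i' hi' => ?_)
    (fun j i => b.coord i (x j)) fun j => ?_
  · rw [Finset.mem_Ico] at hi hi'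
    have := hn.monotone (show (j : ℕ) + 1 ≤ k from hjk)
    omega
  · rw [proj_apply, proj_apply, Finset.sum_Ico_eq_sub _ (hn.monotone (Nat.le_succ _))]

theorem exists_blockSeq_approx (hu : ∀ i, Tendsto (fun k => b.coord i (u k)) atTop (𝓝 0))
    (N : ℕ) {ε : ℝ} (hε : 0 < ε) :
    ∃ k : ℕ → ℕ, StrictMono k ∧ ∃ w : Fin N → X, IsBlockSeq b w ∧ ∀ j, ‖w j - u (k j)‖ < ε := by
  obtain ⟨n, k, hn, hk, hnk⟩ := b.exists_proj_approx hu (half_pos hε)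
  refine ⟨k, hk, _, b.isBlockSeq_proj_sub hn fun j => u (k j), fun j => ?_⟩
  calc ‖b.proj (n (j + 1)) (u (k j)) - b.proj (n j) (u (k j)) - u (k j)‖
      = ‖(b.proj (n (j + 1)) (u (k j)) - u (k j)) - b.proj (n j) (u (k j))‖ := by
        rw [sub_right_comm]
    _ ≤ ‖b.proj (n (j + 1)) (u (k j)) - u (k j)‖ + ‖b.proj (n j) (u (k j))‖ := norm_sub_le _ _
    _ < ε / 2 + ε / 2 := add_lt_add (hnk j).2 (hnk j).1
    _ = ε := add_halves ε

end SchauderBasis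

theorem rpow_sum_rpow_le_of_le {N : ℕ} {r : ℝ} (hr : 0 < r) {x y : Fin N → ℝ}
    (hx : ∀ j, 0 ≤ x j) (hxy : ∀ j, x j ≤ y j) :
    (∑ j, x j ^ r) ^ (1 / r) ≤ (∑ j, y j ^ r) ^ (1 / r) :=
  Real.rpow_le_rpow (Finset.sum_nonneg fun j _ => Real.rpow_nonneg (hx j) _)
    (Finset.sum_le_sum fun j _ => Real.rpow_le_rpow (hx j) (hxy j) hr.le) (by positivity)

theorem sum_const_rpow_rpow_inv (N : ℕ) {r c : ℝ} (hr : r ≠ 0) (hc : 0 ≤ c) :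
    (∑ _j : Fin N, c ^ r) ^ (1 / r) = (N : ℝ) ^ (1 / r) * c := by
  rw [Finset.sum_const, Finset.card_univ, Fintype.card_fin, nsmul_eq_mul,
    Real.mul_rpow (Nat.cast_nonneg _) (Real.rpow_nonneg hc _), ← Real.rpow_mul hc,
    mul_one_div_cancel hr, Real.rpow_one]

theorem exists_nat_lt_rpow {a s t : ℝ} (ha : 0 < a) (hs : 0 < s) (hts : t < s) (K L : ℝ) :
    ∃ N : ℕ, K * (N : ℝ) ^ t + L < a * (N : ℝ) ^ s := by
  have hlim : Tendsto (fun x : ℝ => K * x ^ (t - s) + L * x ^ (-s)) atTop (𝓝 0) := by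
    have := ((tendsto_rpow_neg_atTop (sub_pos.mpr hts)).const_mul K).add
      ((tendsto_rpow_neg_atTop hs).const_mul L)
    simpa using this
  obtain ⟨N, hN, hNpos⟩ := (((hlim.comp tendsto_natCast_atTop_atTop).eventually_lt_const ha).and
    (eventually_gt_atTop 0)).exists
  have hNpos : (0 : ℝ) < N := Nat.cast_pos.mpr hNpos
  refine ⟨N, ?_⟩
  have hsplit :
      K * (N : ℝ) ^ t + L = (K * (N : ℝ) ^ (t - s) + L * (N : ℝ) ^ (-s)) * (N : ℝ) ^ s := by
    rw [add_mul, mul_assoc, mul_assoc, ← Real.rpow_add hNpos, ← Real.rpow_add hNpos]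
    simp
  rw [hsplit]
  exact mul_lt_mul_of_pos_right hN (Real.rpow_pos_of_pos hNpos s)

theorem exists_strictMono_tendsto_sub_zero {X : Type*} [NormedAddCommGroup X]
    [NormedSpace ℝ X] (f : ℕ → X →L[ℝ] ℝ) {v : ℕ → X} {M : ℝ} (hv : ∀ k, ‖v k‖ ≤ M) :
    ∃ ψ : ℕ → ℕ, StrictMono ψ ∧
      ∀ i, Tendsto (fun m => f i (v (ψ (2 * m + 1)) - v (ψ (2 * m)))) atTop (𝓝 0) := by
  have hmem (k : ℕ) :
      (fun i => f i (v k)) ∈ Set.univ.pi fun i => Set.Icc (-(‖f i‖ * M)) (‖f i‖ * M) :=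
    fun i _ => abs_le.mp ((f i).le_opNorm_of_le (hv k))
  obtain ⟨a, -, ψ, hψ, hlim⟩ := (isCompact_univ_pi fun i => isCompact_Icc).tendsto_subseq hmem
  refine ⟨ψ, hψ, fun i => ?_⟩
  have hi : Tendsto (fun m => f i (v (ψ m))) atTop (𝓝 (a i)) := tendsto_pi_nhds.mp hlim i
  have hodd : Tendsto (fun m => 2 * m + 1) atTop atTop :=
    StrictMono.tendsto_atTop fun _ _ h => by omega
  have heven : Tendsto (fun m => 2 * m) atTop atTop :=
    StrictMono.tendsto_atTop fun _ _ h => by omega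
  simpa using (hi.comp hodd).sub (hi.comp heven)

section BlockEstimates

variable {X : Type*} [NormedAddCommGroup X] [NormedSpace ℝ X] {p q θ : ℝ}

def HasBlockEstimates (e : ℕ → X) (p q θ : ℝ) : Prop :=
  ∀ (N : ℕ) (y : Fin N → X), IsBlockSeq e y → (∀ j, ‖y j‖ = 1) → ∀ lam : Fin N → ℝ,
    θ * (∑ j, |lam j| ^ q) ^ (1 / q) ≤ ‖∑ j, lam j • y j‖ ∧
    ‖∑ j, lam j • y j‖ ≤ 2 * (∑ j, |lam j| ^ p) ^ (1 / p)

namespace HasBlockEstimates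

theorem norm_sum_bounds {e : ℕ → X} (hblock : HasBlockEstimates e p q θ)
    (hp : 0 < p) (hq : 0 < q) (hθ : 0 ≤ θ) {N : ℕ} {w : Fin N → X} (hw : IsBlockSeq e w)
    {a b : ℝ} (ha : 0 < a) (hb : 0 ≤ b) (haw : ∀ j, a ≤ ‖w j‖) (hwb : ∀ j, ‖w j‖ ≤ b) :
    θ * a * (N : ℝ) ^ (1 / q) ≤ ‖∑ j, w j‖ ∧ ‖∑ j, w j‖ ≤ 2 * b * (N : ℝ) ^ (1 / p) := by
  have hw0 (j : Fin N) : ‖w j‖ ≠ 0 := (ha.trans_le (haw j)).ne'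
  have hsum : ∑ j, ‖w j‖ • (‖w j‖⁻¹ • w j) = ∑ j, w j :=
    Finset.sum_congr rfl fun j _ => by rw [smul_smul, mul_inv_cancel₀ (hw0 j), one_smul]
  obtain ⟨hlow, hup⟩ := hblock N _ (hw.smul fun j => ‖w j‖⁻¹)
    (fun j => by simp [norm_smul, hw0 j]) fun j => ‖w j‖
  simp only [abs_norm, hsum] at hlow hup
  constructor
  · calc θ * a * (N : ℝ) ^ (1 / q) = θ * (∑ _j : Fin N, a ^ q) ^ (1 / q) := by
          rw [sum_const_rpow_rpow_inv N hq.ne' ha.le]; ring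
      _ ≤ θ * (∑ j, ‖w j‖ ^ q) ^ (1 / q) :=
          mul_le_mul_of_nonneg_left (rpow_sum_rpow_le_of_le hq (fun _ => ha.le) haw) hθ
      _ ≤ ‖∑ j, w j‖ := hlow
  · calc ‖∑ j, w j‖ ≤ 2 * (∑ j, ‖w j‖ ^ p) ^ (1 / p) := hup
      _ ≤ 2 * (∑ _j : Fin N, b ^ p) ^ (1 / p) :=
          mul_le_mul_of_nonneg_left (rpow_sum_rpow_le_of_le hp (fun _ => norm_nonneg _) hwb)
            zero_le_two
      _ = 2 * b * (N : ℝ) ^ (1 / p) := by rw [sum_const_rpow_rpow_inv N hp.ne' hb]; ring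

variable {b : SchauderBasis ℝ X} (hblock : HasBlockEstimates b p q θ)
  (hp : 0 < p) (hq : 0 < q) (hθ : 0 ≤ θ)
include hblock hp hq hθ

theorem exists_strictMono_norm_sum_bounds {u : ℕ → X}
    (hu : ∀ i, Tendsto (fun k => b.coord i (u k)) atTop (𝓝 0)) {c C : ℝ} (hc : 0 < c)
    (hcu : ∀ k, c ≤ ‖u k‖) (huC : ∀ k, ‖u k‖ ≤ C) (N : ℕ) :
    ∃ k : ℕ → ℕ, StrictMono k ∧
      θ * (c / 2) * (N : ℝ) ^ (1 / q) ≤ ‖∑ j : Fin N, u (k j)‖ + 1 ∧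
      ‖∑ j : Fin N, u (k j)‖ ≤ 2 * (C + 1) * (N : ℝ) ^ (1 / p) + 1 := by
  -- `ε ≤ c / 2` keeps the blocks away from `0`, and `N * ε ≤ 1` bounds the total perturbation.
  set ε := min (c / 2) (1 / (N + 1))
  have hεc : ε ≤ c / 2 := min_le_left _ _
  have hεN : N * ε ≤ 1 := by
    calc N * ε ≤ N * (1 / (N + 1)) := mul_le_mul_of_nonneg_left (min_le_right _ _) N.cast_nonneg
      _ ≤ 1 := by rw [mul_one_div, div_le_one (by positivity)]; linarith
  have hε1 : ε ≤ 1 := (min_le_right _ _).trans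
    (div_le_one_of_le₀ (by linarith [N.cast_nonneg (α := ℝ)]) (by positivity))
  have hε : 0 < ε := lt_min (half_pos hc) (by positivity)
  obtain ⟨k, hk, w, hw, hwu⟩ := b.exists_blockSeq_approx hu N hε
  have hwc (j : Fin N) : c / 2 ≤ ‖w j‖ := by
    linarith [hcu (k j), hwu j, norm_sub_norm_le (u (k j)) (w j), norm_sub_rev (u (k j)) (w j)]
  have hwC (j : Fin N) : ‖w j‖ ≤ C + 1 := by
    linarith [huC (k j), hwu j, norm_sub_norm_le (w j) (u (k j))]
  obtain ⟨hlow, hup⟩ := hblock.norm_sum_bounds hp hq hθ hw (half_pos hc)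
    (by linarith [norm_nonneg (u 0), huC 0]) hwc hwC
  have hdist : ‖∑ j, w j - ∑ j : Fin N, u (k j)‖ ≤ 1 := by
    rw [← Finset.sum_sub_distrib]
    calc ‖∑ j, (w j - u (k j))‖ ≤ ∑ j : Fin N, ‖w j - u (k j)‖ := norm_sum_le _ _
      _ ≤ ∑ _j : Fin N, ε := Finset.sum_le_sum fun j _ => (hwu j).le
      _ = N * ε := by simp
      _ ≤ 1 := hεN
  refine ⟨k, hk, ?_, ?_⟩
  · linarith [norm_sub_norm_le (∑ j, w j) (∑ j : Fin N, u (k j))]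
  · linarith [norm_sub_norm_le (∑ j : Fin N, u (k j)) (∑ j, w j),
      norm_sub_rev (∑ j : Fin N, u (k j)) (∑ j, w j)]

-- `∑ x, Sum.elim 1 (-1) x • d (g x)` is `∑ j, (d (g (.inl j)) - d (g (.inr j)))`.
theorem exists_injective_norm_sum_bounds {E : Type*} [NormedAddCommGroup E] [NormedSpace ℝ E]
    {d : ℕ → E} (hd : ∀ k, ‖d k‖ ≤ 1) (hd_sub : ∀ k l, k ≠ l → 1 ≤ ‖d k - d l‖)
    {T : E →L[ℝ] X} {c : ℝ} (hc : 0 < c) (hT : ∀ v, c * ‖v‖ ≤ ‖T v‖) (N : ℕ) :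
    ∃ g : Fin N ⊕ Fin N → ℕ, Function.Injective g ∧
      θ * (c / 2) * (N : ℝ) ^ (1 / q) ≤ ‖T (∑ x, Sum.elim (1 : Fin N → ℝ) (-1) x • d (g x))‖ + 1 ∧
      ‖T (∑ x, Sum.elim (1 : Fin N → ℝ) (-1) x • d (g x))‖ ≤
        2 * (2 * ‖T‖ + 1) * (N : ℝ) ^ (1 / p) + 1 := by
  obtain ⟨ψ, hψ, hcoord⟩ := exists_strictMono_tendsto_sub_zero b.coord (v := fun k => T (d k))
    fun k => (T.le_opNorm_of_le (hd k)).trans_eq (mul_one _)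
  have hcu (m : ℕ) : c ≤ ‖T (d (ψ (2 * m + 1))) - T (d (ψ (2 * m)))‖ := by
    have hne : ψ (2 * m + 1) ≠ ψ (2 * m) := hψ.injective.ne (by omega)
    calc c ≤ c * ‖d (ψ (2 * m + 1)) - d (ψ (2 * m))‖ :=
          le_mul_of_one_le_right hc.le (hd_sub _ _ hne)
      _ ≤ _ := by rw [← map_sub]; exact hT _
  have huC (m : ℕ) : ‖T (d (ψ (2 * m + 1))) - T (d (ψ (2 * m)))‖ ≤ 2 * ‖T‖ := by
    rw [← map_sub]
    refine (T.le_opNorm_of_le ((norm_sub_le _ _).trans ?_)).trans_eq (mul_comm _ _)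
    linarith [hd (ψ (2 * m + 1)), hd (ψ (2 * m))]
  obtain ⟨k, hk, hlow, hup⟩ :=
    hblock.exists_strictMono_norm_sum_bounds hp hq hθ hcoord hc hcu huC N
  refine ⟨Sum.elim (fun j : Fin N => ψ (2 * k j + 1)) (fun j : Fin N => ψ (2 * k j)), ?_, ?_⟩
  · refine Function.Injective.sumElim (fun j j' h => ?_) (fun j j' h => ?_) fun j j' h => ?_
    · exact Fin.val_injective (hk.injective (by have := hψ.injective h; omega))
    · exact Fin.val_injective (hk.injective (by have := hψ.injective h; omega))
    · have := hψ.injective h; omega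
  · have hsum : T (∑ x, Sum.elim (1 : Fin N → ℝ) (-1) x • d (Sum.elim
        (fun j : Fin N => ψ (2 * k j + 1)) (fun j : Fin N => ψ (2 * k j)) x)) =
        ∑ j : Fin N, (T (d (ψ (2 * k j + 1))) - T (d (ψ (2 * k j)))) := by
      simp [Fintype.sum_sum_type, map_sum, ← sub_eq_add_neg]
    rw [hsum]
    exact ⟨hlow, hup⟩

end HasBlockEstimates

end BlockEstimates

section SequenceSpaces

theorem ZeroAtInftyContinuousMap.sum_apply {α β ι : Type*} [TopologicalSpace α]
    [TopologicalSpace β] [AddCommMonoid β] [ContinuousAdd β] (s : Finset ι) (f : ι → C₀(α, β))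
    (x : α) : (∑ i ∈ s, f i) x = ∑ i ∈ s, f i x :=
  map_sum (⟨⟨fun f : C₀(α, β) => f x, rfl⟩, fun _ _ => rfl⟩ : C₀(α, β) →+ β) f s

noncomputable def c0Single (k : ℕ) : C₀(ℕ, ℝ) :=
  ⟨⟨fun n => if n = k then 1 else 0, continuous_of_discreteTopology⟩, by
    rw [cocompact_eq_cofinite, Nat.cofinite_eq_atTop]
    refine tendsto_const_nhds.congr' ?_
    filter_upwards [eventually_gt_atTop k] with n hn
    simp [hn.ne']⟩

theorem c0Single_apply (k n : ℕ) : c0Single k n = if n = k then 1 else 0 := rfl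

theorem norm_sum_smul_c0Single_le {ι : Type*} [Fintype ι] {g : ι → ℕ}
    (hg : Function.Injective g) {σ : ι → ℝ} (hσ : ∀ x, |σ x| ≤ 1) :
    ‖∑ x, σ x • c0Single (g x)‖ ≤ 1 := by
  rw [← ZeroAtInftyContinuousMap.norm_toBCF_eq_norm, BoundedContinuousFunction.norm_le zero_le_one]
  intro m
  change ‖(∑ x, σ x • c0Single (g x)) m‖ ≤ 1
  rw [ZeroAtInftyContinuousMap.sum_apply]
  by_cases hm : ∃ x, g x = m
  · obtain ⟨x, rfl⟩ := hm
    rw [Finset.sum_eq_single x (fun y _ hne => by simp [c0Single_apply, hg.ne hne.symm])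
      (by simp)]
    simpa [c0Single_apply] using hσ x
  · push Not at hm
    simp [c0Single_apply, fun x => (hm x).symm]

theorem norm_c0Single_le (k : ℕ) : ‖c0Single k‖ ≤ 1 := by
  simpa using norm_sum_smul_c0Single_le (g := fun _ : Unit => k)
    (Function.injective_of_subsingleton _) (σ := 1) (by simp)

theorem one_le_norm_c0Single_sub {k l : ℕ} (h : k ≠ l) : 1 ≤ ‖c0Single k - c0Single l‖ := by
  simpa [c0Single_apply, h] using (c0Single k - c0Single l).toBCF.norm_coe_le_norm k

noncomputable def l1Single (k : ℕ) : lp (fun _ : ℕ => ℝ) 1 := lp.single 1 k 1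

theorem norm_l1Single (k : ℕ) : ‖l1Single k‖ = 1 := by
  rw [l1Single, lp.norm_single one_pos, norm_one]

theorem one_le_norm_l1Single_sub {k l : ℕ} (h : k ≠ l) : 1 ≤ ‖l1Single k - l1Single l‖ := by
  have := lp.norm_apply_le_norm one_ne_zero (l1Single k - l1Single l) k
  rwa [lp.coeFn_sub, Pi.sub_apply, l1Single, l1Single, lp.single_apply_self,
    lp.single_apply_ne _ _ _ h, sub_zero, norm_one] at this

theorem norm_sum_smul_l1Single {ι : Type*} [Fintype ι] {g : ι → ℕ}
    (hg : Function.Injective g) (σ : ι → ℝ) : ‖∑ x, σ x • l1Single (g x)‖ = ∑ x, |σ x| := by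
  have := lp.norm_sum_single (E := fun _ : ℕ => ℝ) (p := 1) (by norm_num)
    (Function.extend g σ 0) (Finset.univ.map ⟨g, hg⟩)
  simpa [l1Single, Finset.sum_map, hg.extend_apply, ← lp.single_smul] using this

end SequenceSpaces

theorem stmt_18_general {X : Type*} [NormedAddCommGroup X] [NormedSpace ℝ X]
    (e : ℕ → X) (he : ∀ i, ‖e i‖ = 1)
    (hspan : Submodule.topologicalClosure (Submodule.span ℝ (Set.range e)) = ⊤)
    (huncond : ∀ (s : Finset ℕ) (lam eps : ℕ → ℝ), (∀ i, |eps i| ≤ 1) →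
      ‖∑ i ∈ s, (eps i * lam i) • e i‖ ≤ ‖∑ i ∈ s, lam i • e i‖)
    (p q θ : ℝ) (hp : 1 < p) (hpq : p ≤ q) (hθ : 0 < θ)
    (hblock : ∀ (N : ℕ) (y : Fin N → X), IsBlockSeq e y → (∀ j, ‖y j‖ = 1) →
      ∀ lam : Fin N → ℝ,
        θ * (∑ j, |lam j| ^ q) ^ (1 / q) ≤ ‖∑ j, lam j • y j‖ ∧
        ‖∑ j, lam j • y j‖ ≤ 2 * (∑ j, |lam j| ^ p) ^ (1 / p)) :
    (¬ ∃ (T : C₀(ℕ, ℝ) →L[ℝ] X) (c : ℝ), 0 < c ∧ ∀ v, c * ‖v‖ ≤ ‖T v‖) ∧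
    (¬ ∃ (T : lp (fun _ : ℕ => ℝ) 1 →L[ℝ] X) (c : ℝ), 0 < c ∧ ∀ v, c * ‖v‖ ≤ ‖T v‖) := by
  obtain ⟨b, rfl⟩ := IsOneUnconditional.exists_schauderBasis huncond he hspan
  replace hblock : HasBlockEstimates b p q θ := hblock
  have hp0 : 0 < p := zero_lt_one.trans hp
  have hq0 : 0 < q := hp0.trans_le hpq
  refine ⟨fun ⟨T, c, hc, hT⟩ => ?_, fun ⟨T, c, hc, hT⟩ => ?_⟩
  · obtain ⟨N, hN⟩ := exists_nat_lt_rpow (a := θ * (c / 2)) (by positivity)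
      (one_div_pos.mpr hq0) (one_div_pos.mpr hq0) 0 (‖T‖ + 1)
    obtain ⟨g, hg, hlow, -⟩ := hblock.exists_injective_norm_sum_bounds hp0 hq0 hθ.le
      norm_c0Single_le (fun _ _ => one_le_norm_c0Single_sub) hc hT N
    have hsup := T.le_opNorm_of_le (norm_sum_smul_c0Single_le hg (σ := Sum.elim 1 (-1))
      (by simp [Sum.forall]))
    simp only [zero_mul, zero_add] at hN
    linarith
  · obtain ⟨N, hN⟩ := exists_nat_lt_rpow (a := 2 * c) (by positivity) one_pos
      ((div_lt_one hp0).mpr hp) (2 * (2 * ‖T‖ + 1)) 2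
    obtain ⟨g, hg, -, hup⟩ := hblock.exists_injective_norm_sum_bounds hp0 hq0 hθ.le
      (fun k => (norm_l1Single k).le) (fun _ _ => one_le_norm_l1Single_sub) hc hT N
    have hnorm : ‖∑ x, Sum.elim (1 : Fin N → ℝ) (-1) x • l1Single (g x)‖ = 2 * N := by
      rw [norm_sum_smul_l1Single hg]
      simp [Fintype.sum_sum_type, two_mul]
    have hlow := hT (∑ x, Sum.elim (1 : Fin N → ℝ) (-1) x • l1Single (g x))
    rw [hnorm] at hlow
    rw [Real.rpow_one] at hN
    linarith

/-- if `X` is a Banach space with a normalized 1-unconditional basis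
`(e i)` and there are `1 < p ≤ q < ∞` and `θ > 0` such that every normalized finite
block sequence of `(e i)` satisfies `θ‖·‖_q ≤ ‖∑‖ ≤ 2‖·‖_p`, then neither `c₀` nor
`ℓ₁` embeds isomorphically into `X`. -/
theorem stmt_18 {X : Type*} [NormedAddCommGroup X] [NormedSpace ℝ X] [CompleteSpace X]
    (e : ℕ → X) (he : ∀ i, ‖e i‖ = 1)
    (hspan : Submodule.topologicalClosure (Submodule.span ℝ (Set.range e)) = ⊤)
    (huncond : ∀ (s : Finset ℕ) (lam eps : ℕ → ℝ), (∀ i, |eps i| ≤ 1) →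
      ‖∑ i ∈ s, (eps i * lam i) • e i‖ ≤ ‖∑ i ∈ s, lam i • e i‖)
    (p q θ : ℝ) (hp : 1 < p) (hpq : p ≤ q) (hθ : 0 < θ)
    (hblock : ∀ (N : ℕ) (y : Fin N → X), IsBlockSeq e y → (∀ j, ‖y j‖ = 1) →
      ∀ lam : Fin N → ℝ,
        θ * (∑ j, |lam j| ^ q) ^ (1 / q) ≤ ‖∑ j, lam j • y j‖ ∧
        ‖∑ j, lam j • y j‖ ≤ 2 * (∑ j, |lam j| ^ p) ^ (1 / p)) :
    (¬ ∃ (T : C₀(ℕ, ℝ) →L[ℝ] X) (c : ℝ), 0 < c ∧ ∀ v, c * ‖v‖ ≤ ‖T v‖) ∧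
    (¬ ∃ (T : lp (fun _ : ℕ => ℝ) 1 →L[ℝ] X) (c : ℝ), 0 < c ∧ ∀ v, c * ‖v‖ ≤ ‖T v‖) :=
  stmt_18_general e he hspan huncond p q θ hp hpq hθ hblock
end
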